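/- arXiv:1610.06555 — 4 statements merged into one kernel-verified Lean document; each statement's English description precedes it below -/
import Mathlib

section
/- Let u be a smooth function and λ a complex number with u' = λ·u, and let β = (β_1,...,β_j) be a tuple of non-negative integers summing to α. Then the nested differential word w(β) = ∂^{β_j}(u·∂^{β_{j-1}}(u·⋯·∂^{β_1}u)⋯) equals (∏_{m=1}^j m^{β_m})·λ^α·u^j. -/
/-- `wordRev u [β_j, β_{j-1}, ..., β_1]` is the differential word
`∂^{β_j}(u·∂^{β_{j-1}}(u·⋯·∂^{β_1}(u·1))⋯)`, defined by peeling the outermost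
derivative from the head of the list. -/
noncomputable def wordRev (u : ℝ → ℂ) : List ℕ → (ℝ → ℂ)
  | [] => fun _ => 1
  | b :: bs => iteratedDeriv b (fun x => u x * wordRev u bs x)

/-- `word u [β_1, ..., β_j]` is the differential word
`w(β) = ∂^{β_j}(u·∂^{β_{j-1}}(u·⋯·∂^{β_1}u)⋯)` (with `β_1` innermost). -/
noncomputable def word (u : ℝ → ℂ) (β : List ℕ) : ℝ → ℂ := wordRev u β.reverse

noncomputable def wConst (l : ℂ) : List ℕ → ℂ
  | [] => 1
  | b :: bs => ((bs.length + 1 : ℕ) : ℂ) ^ b * wConst l bs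

lemma powDeriv (u : ℝ → ℂ) (l : ℂ) (hu : ContDiff ℝ (⊤ : ℕ∞) u)
    (hode : ∀ x, deriv u x = l * u x) :
    ∀ (n : ℕ) (j : ℕ) (c : ℂ),
      iteratedDeriv n (fun x => c * (u x) ^ j) =
        fun x => c * ((j : ℂ) * l) ^ n * (u x) ^ j := by
  intro n
  induction n with
  | zero => intro j c; simp [iteratedDeriv_zero]
  | succ n ih =>
    intro j c
    rw [iteratedDeriv_succ']
    have hd : (deriv fun x => c * (u x) ^ j) = fun x => (c * ((j : ℂ) * l)) * (u x) ^ j := by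
      funext x
      have hdu : DifferentiableAt ℝ u x := (hu.differentiable (by simp)) x
      have hp : HasDerivAt (fun y => u y ^ j) (((j : ℂ) * u x ^ (j - 1)) * deriv u x) x :=
        (hasDerivAt_pow j (u x)).comp x hdu.hasDerivAt
      rw [deriv_const_mul _ hp.differentiableAt, hp.deriv, hode]
      cases j with
      | zero => simp
      | succ k => push_cast; ring_nf
    rw [hd, ih]
    funext x
    ring

lemma wordRev_eq (u : ℝ → ℂ) (l : ℂ) (hu : ContDiff ℝ (⊤ : ℕ∞) u)
    (hode : ∀ x, deriv u x = l * u x) :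
    ∀ (bs : List ℕ) (x : ℝ),
      wordRev u bs x = wConst l bs * l ^ bs.sum * (u x) ^ bs.length := by
  intro bs
  induction bs with
  | nil => intro x; simp [wordRev, wConst]
  | cons b bs ih =>
    intro x
    have h : (fun x => u x * wordRev u bs x)
        = fun x => (wConst l bs * l ^ bs.sum) * (u x) ^ (bs.length + 1) := by
      funext y; rw [ih y, pow_succ]; ring
    show iteratedDeriv b (fun x => u x * wordRev u bs x) x = _
    rw [h, powDeriv u l hu hode]
    simp only [wConst, List.sum_cons, List.length_cons]
    rw [mul_pow]
    push_cast
    ring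

lemma wConst_formula (l : ℂ) :
    ∀ L : List ℕ, wConst l L =
      ∏ i ∈ Finset.range L.length, ((L.length - i : ℕ) : ℂ) ^ (L.getD i 0) := by
  intro L
  induction L with
  | nil => simp [wConst]
  | cons b bs ih =>
    rw [List.length_cons, Finset.prod_range_succ']
    simp only [List.getD_cons_succ, List.getD_cons_zero, Nat.succ_sub_succ]
    rw [wConst, ih, Nat.sub_zero]
    ring

theorem stmt_9 (u : ℝ → ℂ) (l : ℂ) (hu : ContDiff ℝ (⊤ : ℕ∞) u)
    (hode : ∀ x, deriv u x = l * u x)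
    (β : List ℕ) (hβ : β ≠ []) (α : ℕ) (hsum : β.sum = α) :
    ∀ x : ℝ, word u β x =
      (∏ i ∈ Finset.range β.length, ((i + 1 : ℕ) : ℂ) ^ (β.getD i 0)) *
        l ^ α * (u x) ^ β.length := by
  intro x
  rw [word, wordRev_eq u l hu hode, List.sum_reverse, List.length_reverse, hsum,
    wConst_formula]
  congr 1
  congr 1
  rw [List.length_reverse]
  rw [← Finset.prod_range_reflect]
  apply Finset.prod_congr rfl
  intro i hi
  rw [Finset.mem_range] at hi
  have h1 : β.length - (β.length - 1 - i) = i + 1 := by omega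
  have h2 : β.reverse.getD (β.length - 1 - i) 0 = β.getD i 0 := by
    rw [List.getD_eq_getElem?_getD, List.getD_eq_getElem?_getD,
      List.getElem?_reverse (by omega)]
    congr 2
    omega
  rw [h2, h1]
end

section
/- With W(j,α,k) = ∑ over tuples (β_k,...,β_j) of non-negative integers summing to α of ∏_{m=k}^j m^{β_m}, there exist rational numbers A_{m,j} (for k ≤ m ≤ j), independent of α, such that W(j,α,k) = ∑_{m=k}^j (m^{m-k}/(m-k)!)·A_{m,j}·m^α for all non-negative integers α. -/
/-!
The generating function of `W j · k` is `∏_{m=k}^j (1 - m t)⁻¹`. Since the `m` are distinct,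
partial fractions rewrite it as `∑_m c_m (1 - m t)⁻¹`, i.e. `W j α k = ∑_m c_m m^α`; concretely,
peel off one variable and apply `∑_{a+b=α} c^a d^b = (c^{α+1} - d^{α+1}) / (c - d)`.
The prescribed factor `m^(m-k) / (m-k)!` is never zero (at `m = k = 0` it is `0^0 = 1`),
so it can be absorbed into `A m`.
-/

/-- `W j α k = ∑_{β_k+⋯+β_j = α, β_i ≥ 0} ∏_{m=k}^j m^{β_m}`, the sum over all
tuples `(β_k, ..., β_j)` of non-negative integers summing to `α` of the product
`∏_{m=k}^j m^{β_m}`. -/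
def W (j α k : ℕ) : ℚ :=
  ∑ β ∈ Finset.Nat.antidiagonalTuple (j - k + 1) α,
    ∏ i : Fin (j - k + 1), ((k + (i : ℕ) : ℕ) : ℚ) ^ (β i)

open Finset

theorem Finset.Nat.sum_antidiagonalTuple_succ {M : Type*} [AddCommMonoid M] (n α : ℕ)
    (F : (Fin (n + 1) → ℕ) → M) :
    ∑ β ∈ Nat.antidiagonalTuple (n + 1) α, F β =
      ∑ ab ∈ antidiagonal α, ∑ γ ∈ Nat.antidiagonalTuple n ab.2, F (Fin.cons ab.1 γ) := by
  have hval : (antidiagonal α).val = (List.Nat.antidiagonal α : Multiset (ℕ × ℕ)) := rfl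
  simp only [Finset.sum_eq_multiset_sum, Nat.antidiagonalTuple, Multiset.Nat.antidiagonalTuple,
    List.Nat.antidiagonalTuple, Multiset.map_coe, Multiset.sum_coe, List.flatMap_def,
    List.map_flatten, List.sum_flatten, List.map_map, hval, Function.comp_def]

section Field

variable {K : Type*} [Field K]

theorem sum_antidiagonal_pow_mul_pow {c d : K} (hcd : c ≠ d) (α : ℕ) :
    ∑ ab ∈ antidiagonal α, c ^ ab.1 * d ^ ab.2 = c / (c - d) * c ^ α + d / (d - c) * d ^ α := by
  have hsub : c - d ≠ 0 := sub_ne_zero.mpr hcd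
  have h := geom_sum₂_mul c d (α + 1)
  simp only [Nat.add_sub_cancel] at h
  rw [Nat.sum_antidiagonal_eq_sum_range_succ_mk, eq_div_of_mul_eq hsub h, ← neg_sub c d]
  field_simp
  ring

/-- `MvPolynomial.hsymm` of degree `α` evaluated at `x`. -/
def completeHomogeneous {n : ℕ} (x : Fin n → K) (α : ℕ) : K :=
  ∑ β ∈ Nat.antidiagonalTuple n α, ∏ i, x i ^ β i

theorem completeHomogeneous_succ {n : ℕ} (x : Fin (n + 1) → K) (α : ℕ) :
    completeHomogeneous x α =
      ∑ ab ∈ antidiagonal α, x 0 ^ ab.1 * completeHomogeneous (Fin.tail x) ab.2 := by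
  simp only [completeHomogeneous, Nat.sum_antidiagonalTuple_succ, Fin.prod_univ_succ,
    Fin.cons_zero, Fin.cons_succ, mul_sum, Fin.tail]

theorem exists_completeHomogeneous_eq_sum_mul_pow {n : ℕ} (x : Fin (n + 1) → K)
    (hx : Function.Injective x) :
    ∃ c : Fin (n + 1) → K, ∀ α, completeHomogeneous x α = ∑ i, c i * x i ^ α := by
  induction n with
  | zero =>
    refine ⟨1, fun α => ?_⟩
    simp [completeHomogeneous, Nat.antidiagonalTuple_one]
  | succ n ih =>
    obtain ⟨c, hc⟩ := ih (Fin.tail x) (hx.comp (Fin.succ_injective _))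
    have hne (i : Fin (n + 1)) : x 0 ≠ x i.succ := hx.ne (Fin.succ_ne_zero i).symm
    refine ⟨Fin.cons (∑ i, c i * (x 0 / (x 0 - x i.succ)))
      (fun i => c i * (x i.succ / (x i.succ - x 0))), fun α => ?_⟩
    calc completeHomogeneous x α
        = ∑ i, c i * ∑ ab ∈ antidiagonal α, x 0 ^ ab.1 * x i.succ ^ ab.2 := by
          simp only [completeHomogeneous_succ x, hc, Fin.tail, mul_sum, mul_left_comm (x 0 ^ _)]
          exact sum_comm
      _ = ∑ i, c i * (x 0 / (x 0 - x i.succ) * x 0 ^ α +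
            x i.succ / (x i.succ - x 0) * x i.succ ^ α) := by
          simp only [sum_antidiagonal_pow_mul_pow (hne _)]
      _ = _ := by
          rw [Fin.sum_univ_succ (n := n + 1)]
          simp only [Fin.cons_zero, Fin.cons_succ, sum_mul, mul_add, sum_add_distrib, mul_assoc]

end Field

theorem stmt_10_general (j k : ℕ) (hkj : k ≤ j) :
    ∃ A : ℕ → ℚ, ∀ α : ℕ,
      W j α k = ∑ m ∈ Finset.Icc k j,
        ((m : ℚ) ^ (m - k) / (Nat.factorial (m - k) : ℚ)) * A m * (m : ℚ) ^ α := by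
  obtain ⟨c, hc⟩ := exists_completeHomogeneous_eq_sum_mul_pow
    (fun i : Fin (j - k + 1) => ((k + (i : ℕ) : ℕ) : ℚ))
    (fun a b h => by simpa [Fin.ext_iff] using h)
  refine ⟨fun m => (m - k).factorial / (m : ℚ) ^ (m - k) * c (Fin.ofNat _ (m - k)), fun α => ?_⟩
  rw [W, ← completeHomogeneous, hc, ← Ico_add_one_right_eq_Icc, sum_Ico_eq_sum_range,
    show j + 1 - k = j - k + 1 by omega, ← Fin.sum_univ_eq_sum_range]
  refine sum_congr rfl fun i _ => ?_
  have hpow : ((k + i : ℕ) : ℚ) ^ (i : ℕ) ≠ 0 := by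
    simp only [ne_eq, pow_eq_zero_iff', Nat.cast_eq_zero, not_and, not_not]; omega
  simp only [Nat.add_sub_cancel_left, Fin.ofNat_val_eq_self]
  field_simp

theorem stmt_10 (j k : ℕ) (hk : 1 ≤ k) (hkj : k ≤ j) :
    ∃ A : ℕ → ℚ, ∀ α : ℕ,
      W j α k = ∑ m ∈ Finset.Icc k j,
        ((m : ℚ) ^ (m - k) / (Nat.factorial (m - k) : ℚ)) * A m * (m : ℚ) ^ α :=
  stmt_10_general j k hkj
end

section
/- Let λ be a nonzero complex number, n ≥ 2 an integer, and C_α = n·S(n-2,n-1-α) − S(n-1,n-1-α). Then the linear differential operator ∑_{α=0}^{n-1} λ^{n-1-α}·C_α·∂^α factors as (n-1)·(∂ − λ)·∏_{a=1}^{n-2}(∂ + a·λ) acting on smooth functions. -/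
/-- `S n α` is the sum over all `α`-element subsets of `{1,...,n}` of the
product of the elements (`S n 0 = 1`, and `S n α = 0` for `α > n`). -/
def S (n α : ℕ) : ℕ := ∑ A ∈ (Finset.Icc 1 n).powersetCard α, ∏ a ∈ A, a

/-- The first-order operator `∂ + c` acting on functions `ℝ → ℂ`. -/
noncomputable def Dop (c : ℂ) (f : ℝ → ℂ) : ℝ → ℂ := fun x => deriv f x + c * f x

/-- The composed operator `∏_{a=1}^{k} (∂ + a·λ)` acting on functions `ℝ → ℂ`. -/
noncomputable def prodOp (l : ℂ) : ℕ → (ℝ → ℂ) → (ℝ → ℂ)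
  | 0 => id
  | k + 1 => fun f => Dop (((k : ℂ) + 1) * l) (prodOp l k f)

lemma S_zero (n : ℕ) : S n 0 = 1 := by simp [S]

lemma S_of_lt {n α : ℕ} (h : n < α) : S n α = 0 := by
  have : (Finset.Icc 1 n).powersetCard α = ∅ := by
    rw [Finset.powersetCard_eq_empty]; simpa using h
  simp [S, this]

lemma S_succ (n j : ℕ) : S (n+1) (j+1) = S n (j+1) + (n+1) * S n j := by
  have hins : Finset.Icc 1 (n+1) = insert (n+1) (Finset.Icc 1 n) := by
    ext a; simp [Finset.mem_Icc, Finset.mem_insert]; omega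
  have hnot : (n+1) ∉ Finset.Icc 1 n := by simp
  rw [S, hins, Finset.powersetCard_succ_insert hnot, Finset.sum_union, S, S,
    Finset.sum_image, Finset.mul_sum]
  · congr 1
    apply Finset.sum_congr rfl
    intro A hA
    have : (n+1) ∉ A := fun hmem => hnot (Finset.mem_powersetCard.mp hA |>.1 hmem)
    rw [Finset.prod_insert this]
  · intro A hA B hB hE
    have hA' : (n+1) ∉ A := fun hmem => hnot (Finset.mem_powersetCard.mp hA |>.1 hmem)
    have hB' : (n+1) ∉ B := fun hmem => hnot (Finset.mem_powersetCard.mp hB |>.1 hmem)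
    ext a
    constructor <;> intro ha
    · have := hE ▸ Finset.mem_insert_of_mem (s := A) (b := n+1) ha
      rcases Finset.mem_insert.mp this with h | h
      · exact absurd (h ▸ ha) hA'
      · exact h
    · have := hE.symm ▸ Finset.mem_insert_of_mem (s := B) (b := n+1) ha
      rcases Finset.mem_insert.mp this with h | h
      · exact absurd (h ▸ ha) hB'
      · exact h
  · rw [Finset.disjoint_right]
    intro A hA
    obtain ⟨B, hB, rfl⟩ := Finset.mem_image.mp hA
    intro hmem
    exact hnot (Finset.mem_powersetCard.mp hmem |>.1 (Finset.mem_insert_self _ _))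

open Finset in
lemma key2 (l : ℂ) (k : ℕ) (D : ℕ → ℂ) :
    (∑ α ∈ range (k+1), l^(k-α)*(S k (k-α):ℂ)*D (α+1))
      + ((k:ℂ)+1)*l * ∑ α ∈ range (k+1), l^(k-α)*(S k (k-α):ℂ)*D α
    = ∑ α ∈ range (k+2), l^(k+1-α)*(S (k+1) (k+1-α):ℂ)*D α := by
  rw [Finset.mul_sum, Finset.sum_range_succ' (fun α => l^(k+1-α)*(S (k+1) (k+1-α):ℂ)*D α) (k+1),
    Finset.sum_range_succ' (fun α => ((k:ℂ)+1)*l*(l^(k-α)*(S k (k-α):ℂ)*D α)) k,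
    Finset.sum_range_succ (fun α => l^(k-α)*(S k (k-α):ℂ)*D (α+1)) k,
    Finset.sum_range_succ (fun α => l^(k+1-(α+1))*(S (k+1) (k+1-(α+1)):ℂ)*D (α+1)) k]
  have h1 : ∑ α ∈ range k, l^(k-α)*(S k (k-α):ℂ)*D (α+1)
      + ∑ α ∈ range k, ((k:ℂ)+1)*l*(l^(k-(α+1))*(S k (k-(α+1)):ℂ)*D (α+1))
      = ∑ α ∈ range k, l^(k+1-(α+1))*(S (k+1) (k+1-(α+1)):ℂ)*D (α+1) := by
    rw [← Finset.sum_add_distrib]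
    apply Finset.sum_congr rfl
    intro α hα
    have hαk : α < k := Finset.mem_range.mp hα
    obtain ⟨j, hj⟩ : ∃ j, k - α = j + 1 := ⟨k - α - 1, by omega⟩
    have h2 : k - (α+1) = j := by omega
    have h3 : k + 1 - (α+1) = j + 1 := by omega
    rw [hj, h2, h3, S_succ]
    push_cast
    ring
  simp only [Nat.sub_zero, Nat.sub_self, S_zero, Nat.cast_one]
  have h0' : (S (k+1) (k+1) : ℂ) = ((k:ℂ)+1) * (S k k : ℂ) := by
    rw [S_succ, S_of_lt (Nat.lt_succ_self k)]; push_cast; ring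
  linear_combination h1 - D 0 * h0' * l^(k+1)

open Finset in
lemma keyE (l : ℂ) (m : ℕ) (D : ℕ → ℂ) :
    ∑ α ∈ range (m+2), l^(m+1-α)*(S m (m+1-α):ℂ)*D α
      = ∑ α ∈ range (m+1), l^(m-α)*(S m (m-α):ℂ)*D (α+1) := by
  rw [Finset.sum_range_succ' (fun α => l^(m+1-α)*(S m (m+1-α):ℂ)*D α) (m+1)]
  have : (S m (m+1-0) : ℂ) = 0 := by
    rw [Nat.sub_zero, S_of_lt (Nat.lt_succ_self m)]; simp
  rw [this]
  simp

open Finset in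
lemma key (l : ℂ) (m : ℕ) (D : ℕ → ℂ) :
    ∑ α ∈ range (m+2), l^(m+1-α) * (((m:ℂ)+2)*(S m (m+1-α):ℂ) - (S (m+1) (m+1-α):ℂ)) * D α
    = ((m:ℂ)+1) * ((∑ α ∈ range (m+1), l^(m-α)*(S m (m-α):ℂ)*D (α+1))
        + (-l) * ∑ α ∈ range (m+1), l^(m-α)*(S m (m-α):ℂ)*D α) := by
  have hsplit : ∑ α ∈ range (m+2), l^(m+1-α) * (((m:ℂ)+2)*(S m (m+1-α):ℂ) - (S (m+1) (m+1-α):ℂ)) * D α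
      = ((m:ℂ)+2) * (∑ α ∈ range (m+2), l^(m+1-α)*(S m (m+1-α):ℂ)*D α)
        - ∑ α ∈ range (m+2), l^(m+1-α)*(S (m+1) (m+1-α):ℂ)*D α := by
    rw [Finset.mul_sum, ← Finset.sum_sub_distrib]
    apply Finset.sum_congr rfl
    intro α _
    ring
  rw [hsplit, keyE]
  linear_combination key2 l m D

lemma deriv_expand (u : ℝ → ℂ) (hu : ContDiff ℝ (⊤ : ℕ∞) u) (c : ℕ → ℂ) (s : Finset ℕ) (x : ℝ) :
    deriv (fun y => ∑ α ∈ s, c α * iteratedDeriv α u y) x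
      = ∑ α ∈ s, c α * iteratedDeriv (α+1) u x := by
  have hdiff : ∀ α : ℕ, DifferentiableAt ℝ (iteratedDeriv α u) x := by
    intro α
    exact (hu.differentiable_iteratedDeriv α (by exact_mod_cast lt_top_iff_ne_top.mpr (by simp))).differentiableAt
  rw [deriv_fun_sum (fun α _ => (hdiff α).const_mul (c α))]
  apply Finset.sum_congr rfl
  intro α _
  rw [deriv_const_mul _ (hdiff α), ← iteratedDeriv_succ]

open Finset in
lemma prod_expand (l : ℂ) (u : ℝ → ℂ) (hu : ContDiff ℝ (⊤ : ℕ∞) u) :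
    ∀ k, prodOp l k u = fun x => ∑ α ∈ range (k+1), l^(k-α) * (S k (k-α):ℂ) * iteratedDeriv α u x := by
  intro k
  induction k with
  | zero => funext x; simp [prodOp, S_zero]
  | succ k ih =>
    funext x
    show Dop (((k:ℂ)+1)*l) (prodOp l k u) x = _
    rw [Dop, ih, deriv_expand u hu]
    exact key2 l k (fun α => iteratedDeriv α u x)

theorem stmt_17 (n : ℕ) (hn : 2 ≤ n) (l : ℂ) (hl : l ≠ 0)
    (u : ℝ → ℂ) (hu : ContDiff ℝ (⊤ : ℕ∞) u) :
    ∀ x : ℝ,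
      ∑ α ∈ Finset.range n,
          l ^ (n - 1 - α) *
            ((n : ℂ) * (S (n - 2) (n - 1 - α) : ℂ) - (S (n - 1) (n - 1 - α) : ℂ)) *
              iteratedDeriv α u x =
        ((n : ℂ) - 1) * Dop (-l) (prodOp l (n - 2) u) x := by
  obtain ⟨m, rfl⟩ : ∃ m, n = m + 2 := ⟨n - 2, by omega⟩
  intro x
  have h1 : m + 2 - 1 = m + 1 := rfl
  have h2 : m + 2 - 2 = m := rfl
  rw [h1, h2, Dop, prod_expand l u hu, deriv_expand u hu]
  have hcast : ((m+2 : ℕ) : ℂ) = (m:ℂ)+2 := by push_cast; ring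
  have hcast2 : ((m+2 : ℕ) : ℂ) - 1 = (m:ℂ)+1 := by push_cast; ring
  rw [hcast]
  have hk := key l m (fun α => iteratedDeriv α u x)
  beta_reduce at hk ⊢
  linear_combination hk
end

section
/- Let ζ be a primitive m-th root of unity with m ≥ 3, λ a nonzero complex number, and n ≥ 3 an integer. Suppose u(x) = ∑_{r=0}^{m-1} β_r·e^{λζ^r x} satisfies ∑_{α=0}^{n-1} λ^{n-1-α}·C_α·u^{(α)} = 0 identically, where C_α = n·S(n-2,n-1-α) − S(n-1,n-1-α). Then β_r = 0 for all r except possibly r = 0 and (when m is even) r = m/2; consequently u' = λu or u'' = λ²u. -/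
/-- The coefficients `C_α = n·S(n-2, n-1-α) − S(n-1, n-1-α)`, as complex numbers. -/
def C (n α : ℕ) : ℂ := (n : ℂ) * (S (n - 2) (n - 1 - α) : ℂ) - (S (n - 1) (n - 1 - α) : ℂ)

/-!
Each exponential `e^{λζ^r x}` is an eigenfunction of `d/dx`, so the differential relation reads
`∑_r β_r λ^{n-1} h(ζ^r) e^{λζ^r x} = 0` with `h(z) = ∑_α C_α z^α`. The functions `t ↦ e^{μt}` are
distinct characters of `(ℝ, +)`, hence linearly independent by Dedekind's lemma, so
`β_r h(ζ^r) = 0`. Expanding `∏_{i=1}^{k} (z + i)` by Vieta gives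
`h(z) = (n-1)(z-1)∏_{i=1}^{n-2}(z+i)`, whose only roots of modulus one are `±1`; and `ζ^r = ±1`
forces `r = 0` or `2r = m`. Every surviving term has `(λζ^r)² = λ²`, whence `u'' = λ²u`.
-/

open Finset

section ExponentialSums

variable {ι : Type*} (s : Finset ι) (c μ : ι → ℂ)

lemma hasDerivAt_sum_mul_cexp (x : ℝ) :
    HasDerivAt (fun t : ℝ => ∑ i ∈ s, c i * Complex.exp (μ i * t))
      (∑ i ∈ s, c i * μ i * Complex.exp (μ i * x)) x := by
  refine HasDerivAt.fun_sum fun i _ => ?_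
  have := (((hasDerivAt_id x).ofReal_comp.const_mul (μ i)).cexp).const_mul (c i)
  simpa [mul_assoc, mul_comm, mul_left_comm] using this

lemma iteratedDeriv_sum_mul_cexp (k : ℕ) :
    iteratedDeriv k (fun t : ℝ => ∑ i ∈ s, c i * Complex.exp (μ i * t))
      = fun x : ℝ => ∑ i ∈ s, c i * μ i ^ k * Complex.exp (μ i * x) := by
  induction k with
  | zero => simp
  | succ k ih =>
    rw [iteratedDeriv_succ, ih]
    funext x
    rw [(hasDerivAt_sum_mul_cexp s (fun i => c i * μ i ^ k) μ x).deriv]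
    simp only [pow_succ, mul_assoc]

lemma sum_mul_iteratedDeriv_sum_mul_cexp (a : ℕ → ℂ) (N : ℕ) (x : ℝ) :
    ∑ k ∈ range N,
        a k * iteratedDeriv k (fun t : ℝ => ∑ i ∈ s, c i * Complex.exp (μ i * t)) x
      = ∑ i ∈ s, c i * (∑ k ∈ range N, a k * μ i ^ k) * Complex.exp (μ i * x) := by
  simp only [iteratedDeriv_sum_mul_cexp, mul_sum, sum_mul]
  rw [sum_comm]
  exact sum_congr rfl fun i _ => sum_congr rfl fun k _ => by ring

noncomputable def cexpMulChar (ν : ℂ) : Multiplicative ℝ →* ℂ where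
  toFun t := Complex.exp (ν * t.toAdd)
  map_one' := by simp
  map_mul' s t := by simp [mul_add, Complex.exp_add]

lemma cexpMulChar_injective : Function.Injective cexpMulChar := by
  intro ν ν' h
  have hderiv (ν : ℂ) : HasDerivAt (fun t : ℝ => Complex.exp (ν * t)) ν 0 := by
    simpa using hasDerivAt_sum_mul_cexp {()} 1 (fun _ => ν) 0
  have hfun : (fun t : ℝ => Complex.exp (ν * t)) = fun t : ℝ => Complex.exp (ν' * t) :=
    funext fun t => DFunLike.congr_fun h (Multiplicative.ofAdd t)
  exact (hderiv ν).unique (hfun ▸ hderiv ν')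

lemma linearIndependent_cexp_mul :
    LinearIndependent ℂ (fun ν : ℂ => fun t : ℝ => Complex.exp (ν * t)) :=
  (linearIndependent_monoidHom (Multiplicative ℝ) ℂ).comp _ cexpMulChar_injective

lemma deriv_deriv_sum_mul_cexp {ν : ℂ} (h : ∀ i ∈ s, c i = 0 ∨ μ i ^ 2 = ν ^ 2) (x : ℝ) :
    deriv (deriv fun t : ℝ => ∑ i ∈ s, c i * Complex.exp (μ i * t)) x
      = ν ^ 2 * ∑ i ∈ s, c i * Complex.exp (μ i * x) := by
  rw [← iteratedDeriv_one, ← iteratedDeriv_succ', iteratedDeriv_sum_mul_cexp, mul_sum]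
  refine sum_congr rfl fun i hi => ?_
  rcases h i hi with hc | hμ
  · simp [hc]
  · rw [hμ]
    ring

variable {s c μ}

lemma eq_zero_of_sum_mul_cexp_eq_zero (hμ : Set.InjOn μ s)
    (h : ∀ x : ℝ, ∑ i ∈ s, c i * Complex.exp (μ i * x) = 0) : ∀ i ∈ s, c i = 0 := by
  intro i hi
  refine Fintype.linearIndependent_iff.mp
    (linearIndependent_cexp_mul.comp _ hμ.injective) (fun j => c j) ?_ ⟨i, hi⟩
  funext x
  simpa [Finset.sum_attach s (fun i => c i * Complex.exp (μ i * x))] using h x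

end ExponentialSums

section ElementarySymmetric

variable {R : Type*} [CommSemiring R]

lemma S_eq_zero {k j : ℕ} (h : k < j) : S k j = 0 := by
  rw [S, powersetCard_eq_empty.mpr (by simpa using h), sum_empty]

lemma sum_S_mul_pow (k : ℕ) (z : R) :
    ∑ j ∈ range (k + 1), (S k j : R) * z ^ (k - j) = ∏ i ∈ Icc 1 k, (z + i) := by
  simp_rw [add_comm z, prod_add, sum_powerset, Nat.card_Icc, add_tsub_cancel_right, S,
    Nat.cast_sum, Nat.cast_prod, sum_mul]
  refine sum_congr rfl fun j _ => sum_congr rfl fun A hA => ?_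
  rw [mem_powersetCard] at hA
  rw [prod_const, card_sdiff_of_subset hA.1, Nat.card_Icc, add_tsub_cancel_right, hA.2]

lemma sum_S_sub_mul_pow {k N : ℕ} (hkN : k < N) (z : R) :
    ∑ a ∈ range N, (S k (N - 1 - a) : R) * z ^ a
      = z ^ (N - 1 - k) * ∏ i ∈ Icc 1 k, (z + i) := by
  rw [← sum_range_reflect]
  calc ∑ j ∈ range N, (S k (N - 1 - (N - 1 - j)) : R) * z ^ (N - 1 - j)
      = ∑ j ∈ range N, (S k j : R) * z ^ (N - 1 - j) :=
        sum_congr rfl fun j hj => by rw [Nat.sub_sub_self (by rw [mem_range] at hj; omega)]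
    _ = ∑ j ∈ range (k + 1), (S k j : R) * z ^ (N - 1 - j) := by
        refine (sum_subset (range_subset_range.2 (by omega)) fun j _ hj => ?_).symm
        rw [S_eq_zero (by simpa using hj), Nat.cast_zero, zero_mul]
    _ = ∑ j ∈ range (k + 1), z ^ (N - 1 - k) * ((S k j : R) * z ^ (k - j)) :=
        sum_congr rfl fun j hj => by
          rw [mul_left_comm, ← pow_add]; congr 2; rw [mem_range] at hj; omega
    _ = z ^ (N - 1 - k) * ∏ i ∈ Icc 1 k, (z + i) := by rw [← mul_sum, sum_S_mul_pow]

lemma sum_C_mul_pow {n : ℕ} (hn : 2 ≤ n) (z : ℂ) :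
    ∑ a ∈ range n, C n a * z ^ a = (n - 1) * (z - 1) * ∏ i ∈ Icc 1 (n - 2), (z + i) := by
  obtain ⟨k, rfl⟩ : ∃ k, n = k + 2 := ⟨n - 2, by omega⟩
  have hS₁ : ∑ a ∈ range (k + 2), (S k (k + 1 - a) : ℂ) * z ^ a
      = z * ∏ i ∈ Icc 1 k, (z + i) := by
    simpa [Nat.sub_sub_self] using sum_S_sub_mul_pow (k := k) (N := k + 2) (by omega) z
  have hS₂ : ∑ a ∈ range (k + 2), (S (k + 1) (k + 1 - a) : ℂ) * z ^ a
      = (z + (k + 1)) * ∏ i ∈ Icc 1 k, (z + i) := by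
    have := sum_S_sub_mul_pow (k := k + 1) (N := k + 2) (by omega) z
    rw [show k + 2 - 1 = k + 1 from rfl, Nat.sub_self, pow_zero, one_mul,
      prod_Icc_succ_top (by omega)] at this
    rw [this]
    push_cast
    ring
  simp only [C, show k + 2 - 1 = k + 1 from rfl, Nat.add_sub_cancel, sub_mul, mul_assoc,
    sum_sub_distrib, ← mul_sum, hS₁, hS₂]
  push_cast
  ring

end ElementarySymmetric

lemma prod_add_natCast_ne_zero {w : ℂ} (hw : ‖w‖ = 1) (hw' : w ≠ -1) (k : ℕ) :
    ∏ i ∈ Icc 1 k, (w + i) ≠ 0 := by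
  refine prod_ne_zero_iff.2 fun i _ hi => hw' ?_
  have hwi : w = -i := eq_neg_of_add_eq_zero_left hi
  have hi1 : (i : ℝ) = 1 := by simpa [hwi] using hw
  rw [hwi, show (i : ℂ) = 1 by exact_mod_cast hi1]

lemma sum_C_mul_pow_ne_zero {n : ℕ} (hn : 2 ≤ n) {w : ℂ} (hw : ‖w‖ = 1) (hw₁ : w ≠ 1)
    (hw₂ : w ≠ -1) : ∑ a ∈ range n, C n a * w ^ a ≠ 0 := by
  rw [sum_C_mul_pow hn]
  refine mul_ne_zero (mul_ne_zero ?_ (sub_ne_zero.2 hw₁)) (prod_add_natCast_ne_zero hw hw₂ _)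
  rw [sub_ne_zero]
  exact_mod_cast (by omega : n ≠ 1)

lemma sum_pow_sub_mul_mul_pow {R : Type*} [CommSemiring R] (n : ℕ) (a : ℕ → R) (l w : R) :
    ∑ k ∈ range n, l ^ (n - 1 - k) * a k * (l * w) ^ k
      = l ^ (n - 1) * ∑ k ∈ range n, a k * w ^ k := by
  rw [mul_sum]
  refine sum_congr rfl fun k hk => ?_
  rw [mul_pow, ← pow_sub_mul_pow l (show k ≤ n - 1 by rw [mem_range] at hk; omega)]
  ring

lemma IsPrimitiveRoot.pow_ne_neg_one {M : Type*} [CommMonoid M] [HasDistribNeg M] {ζ : M}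
    {m r : ℕ} (hζ : IsPrimitiveRoot ζ m) (hr₀ : r ≠ 0) (hr : r < m) (h2r : 2 * r ≠ m) :
    ζ ^ r ≠ -1 := by
  intro h
  obtain ⟨k, hk⟩ := hζ.dvd_of_pow_eq_one (2 * r) (by rw [pow_mul', h, neg_one_sq])
  have : k < 2 := by nlinarith
  interval_cases k <;> omega

theorem stmt_19_general (m : ℕ) (ζ : ℂ) (hζ : IsPrimitiveRoot ζ m)
    (l : ℂ) (hl : l ≠ 0) (n : ℕ) (hn : 3 ≤ n) (β : ℕ → ℂ)
    (u : ℝ → ℂ)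
    (hu : u = fun x : ℝ => ∑ r ∈ Finset.range m, β r * Complex.exp (l * ζ ^ r * (x : ℂ)))
    (hvanish : ∀ x : ℝ,
      ∑ α ∈ Finset.range n, l ^ (n - 1 - α) * C n α * iteratedDeriv α u x = 0) :
    (∀ r : ℕ, r < m → r ≠ 0 → 2 * r ≠ m → β r = 0) ∧
      ((∀ x, deriv u x = l * u x) ∨ (∀ x, deriv (deriv u) x = l ^ 2 * u x)) := by
  subst hu
  have hinj : Set.InjOn (fun r => l * ζ ^ r) (range m) := fun i hi j hj hij =>
    hζ.pow_inj (mem_range.1 hi) (mem_range.1 hj) (mul_left_cancel₀ hl hij)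
  have hcoef : ∀ r ∈ range m, β r * (l ^ (n - 1) * ∑ a ∈ range n, C n a * (ζ ^ r) ^ a) = 0 := by
    refine eq_zero_of_sum_mul_cexp_eq_zero hinj fun x => ?_
    rw [← hvanish x, sum_mul_iteratedDeriv_sum_mul_cexp]
    simp only [sum_pow_sub_mul_mul_pow]
  have hβ : ∀ r, r < m → r ≠ 0 → 2 * r ≠ m → β r = 0 := by
    intro r hr hr₀ h2r
    have hw : ‖ζ ^ r‖ = 1 := Complex.norm_eq_one_of_pow_eq_one
      (by rw [← pow_mul, mul_comm, pow_mul, hζ.pow_eq_one, one_pow]) (by omega)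
    exact (mul_eq_zero.1 (hcoef r (mem_range.2 hr))).resolve_right (mul_ne_zero (pow_ne_zero _ hl)
      (sum_C_mul_pow_ne_zero (by omega) hw (hζ.pow_ne_one_of_pos_of_lt hr₀ hr)
        (hζ.pow_ne_neg_one hr₀ hr h2r)))
  refine ⟨hβ, Or.inr (deriv_deriv_sum_mul_cexp _ _ _ fun r hr => ?_)⟩
  rcases eq_or_ne r 0 with rfl | hr₀
  · simp
  rcases eq_or_ne (2 * r) m with h2r | h2r
  · rw [mul_pow, ← pow_mul, mul_comm r, h2r, hζ.pow_eq_one, mul_one]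
    exact Or.inr rfl
  · exact Or.inl (hβ r (mem_range.1 hr) hr₀ h2r)

theorem stmt_19 (m : ℕ) (hm : 3 ≤ m) (ζ : ℂ) (hζ : IsPrimitiveRoot ζ m)
    (l : ℂ) (hl : l ≠ 0) (n : ℕ) (hn : 3 ≤ n) (β : ℕ → ℂ)
    (u : ℝ → ℂ)
    (hu : u = fun x : ℝ => ∑ r ∈ Finset.range m, β r * Complex.exp (l * ζ ^ r * (x : ℂ)))
    (hvanish : ∀ x : ℝ,
      ∑ α ∈ Finset.range n, l ^ (n - 1 - α) * C n α * iteratedDeriv α u x = 0) :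
    (∀ r : ℕ, r < m → r ≠ 0 → 2 * r ≠ m → β r = 0) ∧
      ((∀ x, deriv u x = l * u x) ∨ (∀ x, deriv (deriv u) x = l ^ 2 * u x)) :=
  stmt_19_general m ζ hζ l hl n hn β u hu hvanish
end
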